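/- The edge functions ε_i(ξ) := −∑_{k=0}^{i−1} l_k'(ξ), i = 1..N, built from Lagrange basis polynomials, satisfy ∫_{ξ_{p−1}}^{ξ_p} ε_i(ξ) dξ = δ_{ip}, i.e., the integral of ε_i over the p-th subinterval equals 1 if i = p and 0 otherwise. -/

import Mathlib

open scoped BigOperators

/-- The Lagrange interpolation basis polynomial at node `i`, for nodes `ξ`. -/
noncomputable def lagBasis {N : ℕ} (ξ : Fin (N + 1) → ℝ) (i : Fin (N + 1)) (x : ℝ) : ℝ :=
  ∏ j ∈ Finset.univ.erase i, (x - ξ j) / (ξ i - ξ j)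

/-- The edge function `ε_i = -∑_{k=0}^{i-1} l_k'`. -/
noncomputable def edgeFun {N : ℕ} (ξ : Fin (N + 1) → ℝ) (i : ℕ) (x : ℝ) : ℝ :=
  -∑ k : Fin (N + 1), if (k : ℕ) < i then deriv (lagBasis ξ k) x else 0

lemma contDiff_lagBasis {N : ℕ} (ξ : Fin (N + 1) → ℝ) (k : Fin (N + 1)) :
    ContDiff ℝ (⊤ : ℕ∞) (lagBasis ξ k) := by
  unfold lagBasis
  apply contDiff_prod
  intro j _
  exact ((contDiff_id.sub contDiff_const)).div_const _

lemma lagBasis_eval {N : ℕ} (ξ : Fin (N + 1) → ℝ) (hξ : Function.Injective ξ)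
    (k j : Fin (N + 1)) : lagBasis ξ k (ξ j) = if k = j then 1 else 0 := by
  unfold lagBasis
  by_cases h : k = j
  · subst h
    rw [if_pos rfl]
    apply Finset.prod_eq_one
    intro l hl
    have : ξ k - ξ l ≠ 0 := sub_ne_zero.mpr (fun e => (Finset.mem_erase.mp hl).1 (hξ e).symm)
    exact div_self this
  · rw [if_neg h]
    apply Finset.prod_eq_zero (i := j) (Finset.mem_erase.mpr ⟨fun e => h e.symm, Finset.mem_univ _⟩)
    simp

/-- The edge functions `ε_i := -∑_{k=0}^{i-1} l_k'`, `i = 1..N`, built from the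
Lagrange basis polynomials, satisfy `∫_{ξ_{p-1}}^{ξ_p} ε_i(ξ) dξ = δ_{ip}`:
the integral of `ε_i` over the `p`-th subinterval equals `1` if `i = p` and `0`
otherwise. -/
theorem integral_edgeFun {N : ℕ} (ξ : Fin (N + 1) → ℝ) (hξ : StrictMono ξ)
    (i p : ℕ) (hi1 : 1 ≤ i) (hiN : i ≤ N) (hp1 : 1 ≤ p) (hpN : p ≤ N) :
    ∫ x in (ξ ⟨p - 1, by omega⟩)..(ξ ⟨p, by omega⟩), edgeFun ξ i x
      = if i = p then 1 else 0 := by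
  set F : ℝ → ℝ := fun x => -∑ k : Fin (N + 1), if (k : ℕ) < i then lagBasis ξ k x else 0
    with hF
  have hd : ∀ x : ℝ, HasDerivAt F (edgeFun ξ i x) x := by
    intro x
    have : HasDerivAt (fun x => ∑ k : Fin (N + 1), if (k : ℕ) < i then lagBasis ξ k x else 0)
        (∑ k : Fin (N + 1), if (k : ℕ) < i then deriv (lagBasis ξ k) x else 0) x := by
      apply HasDerivAt.fun_sum
      intro k _
      by_cases h : (k : ℕ) < i
      · simp only [if_pos h]
        exact ((contDiff_lagBasis ξ k).differentiable (by simp) x).hasDerivAt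
      · simp only [if_neg h]
        exact hasDerivAt_const x 0
    simpa [edgeFun, F] using this.fun_neg
  have hcont : Continuous (edgeFun ξ i) := by
    unfold edgeFun
    apply Continuous.neg
    apply continuous_finset_sum
    intro k _
    by_cases h : (k : ℕ) < i
    · simp only [if_pos h]
      exact ((contDiff_lagBasis ξ k).continuous_deriv (mod_cast le_top))
    · simp only [if_neg h]
      exact continuous_const
  rw [intervalIntegral.integral_eq_sub_of_hasDerivAt (fun x _ => hd x)
    (hcont.intervalIntegrable _ _)]
  have hFe : ∀ j : Fin (N + 1), F (ξ j) = -(if (j : ℕ) < i then 1 else 0) := by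
    intro j
    rw [hF]
    simp only
    congr 1
    have : ∀ k : Fin (N + 1), (if (k : ℕ) < i then lagBasis ξ k (ξ j) else 0)
        = (if (k : ℕ) < i then (if k = j then (1:ℝ) else 0) else 0) := by
      intro k
      by_cases h : (k : ℕ) < i <;> simp [h, lagBasis_eval ξ hξ.injective]
    rw [Finset.sum_congr rfl fun k _ => this k]
    have h2 : ∀ k : Fin (N+1), (if (k:ℕ) < i then if k = j then (1:ℝ) else 0 else 0)
        = if k = j then (if (j:ℕ) < i then (1:ℝ) else 0) else 0 := by
      intro k; by_cases hkj : k = j <;> simp [hkj]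
    rw [Finset.sum_congr rfl fun k _ => h2 k, Finset.sum_ite_eq']
    simp
  rw [hFe, hFe]
  simp only [Fin.val_mk]
  split_ifs <;> first | omega | norm_num
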